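/- (First-order payoff consistency.) In the setting of the previous statement, assume additionally that either (a) ρ > L with L = L_g(1 + L_s) and g is bounded, or (b) ρ > L + K where K is the linear-growth constant of g. Then there exist C > 0 and h₀ > 0 such that |W_h(x) - W(x)| ≤ C h for all 0 < h ≤ h₀. -/

import Mathlib

/-!
Cut `(0, ∞)` into the cells `(k h, (k + 1) h]`. On the `k`-th cell the integrand of `W` differs
from the `k`-th summand of `W_h / h` through three effects: the Euler error
`‖y (k h) - y_k‖ ≤ k L A h² e^{(L + μ) k h}` (discrete Gronwall), the discount error
`e^{-ρ k h} - (1 - ρ h)^k`, whose series sums to `(1 - e^{-ρ h})⁻¹ - (ρ h)⁻¹ ≤ 1`, and the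
drift of the integrand across the cell, of size `h e^{μ t}`. Here `A e^{μ t}` bounds `‖y'‖`:
`μ = 0` if `g` is bounded, `μ = K` by Gronwall under linear growth. Since `ρ > L + μ`, all weights
are dominated by powers of `e^{-(ρ - L - μ) h}`, and `h` times such a geometric series stays
bounded as `h → 0`.
-/

open Real MeasureTheory Set
open scoped NNReal

theorem inv_one_sub_exp_neg_le {x : ℝ} (hx : 0 < x) : (1 - exp (-x))⁻¹ ≤ 1 + x⁻¹ := by
  have hexp : exp (-x) ≤ (1 + x)⁻¹ := by
    rw [exp_neg]; exact inv_anti₀ (by positivity) (by linarith [add_one_le_exp x])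
  calc (1 - exp (-x))⁻¹ ≤ (1 - (1 + x)⁻¹)⁻¹ := by
        apply inv_anti₀ _ (by linarith)
        rw [sub_pos]; exact inv_lt_one_of_one_lt₀ (by linarith)
    _ = 1 + x⁻¹ := by field_simp [hx.ne']; ring

theorem exp_neg_mul_nat_mul (c h : ℝ) (k : ℕ) : exp (-c * (k * h)) = exp (-(c * h)) ^ k := by
  rw [← exp_nat_mul]; ring_nf

theorem one_sub_mul_pow_le_exp {ρ h : ℝ} (hρh : ρ * h ≤ 1) (k : ℕ) :
    (1 - ρ * h) ^ k ≤ exp (-ρ * (k * h)) := by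
  rw [exp_neg_mul_nat_mul]
  exact pow_le_pow_left₀ (by linarith) (one_sub_le_exp_neg _) k

theorem abs_exp_neg_mul_sub_exp_neg_mul_le {ρ s t : ℝ} (hρ : 0 ≤ ρ) (hst : s ≤ t) :
    |exp (-ρ * s) - exp (-ρ * t)| ≤ ρ * (t - s) * exp (-ρ * s) := by
  have hsplit : exp (-ρ * t) = exp (-ρ * s) * exp (-(ρ * (t - s))) := by
    rw [← exp_add]; ring_nf
  have hlow := one_sub_le_exp_neg (ρ * (t - s))
  have hup : exp (-(ρ * (t - s))) ≤ 1 := exp_le_one_iff.2 (by nlinarith)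
  have hpos := exp_pos (-ρ * s)
  rw [abs_of_nonneg (by rw [hsplit]; nlinarith), hsplit]
  nlinarith

theorem abs_mul_sub_mul_le {r e e' a b c α β γ M : ℝ} (hr : 0 ≤ r) (hre : r ≤ e) (he' : 0 ≤ e')
    (hee' : |e - e'| ≤ γ) (hab : |a - b| ≤ α) (hbc : |b - c| ≤ β) (hb : |b| ≤ M) :
    |r * a - e' * c| ≤ r * α + (e - r) * M + γ * M + e' * β := by
  have h1 : |r * (a - b)| ≤ r * α := by
    rw [abs_mul, abs_of_nonneg hr]; exact mul_le_mul_of_nonneg_left hab hr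
  have h2 : |(r - e) * b| ≤ (e - r) * M := by
    rw [abs_mul, abs_of_nonpos (by linarith), neg_sub]
    exact mul_le_mul_of_nonneg_left hb (by linarith)
  have h3 : |(e - e') * b| ≤ γ * M := by
    rw [abs_mul]; exact mul_le_mul hee' hb (abs_nonneg _) ((abs_nonneg _).trans hee')
  have h4 : |e' * (b - c)| ≤ e' * β := by
    rw [abs_mul, abs_of_nonneg he']; exact mul_le_mul_of_nonneg_left hbc he'
  calc |r * a - e' * c| = |r * (a - b) + (r - e) * b + (e - e') * b + e' * (b - c)| := by
        congr 1; ring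
    _ ≤ _ := by linarith [abs_add_three (r * (a - b)) ((r - e) * b) ((e - e') * b),
          abs_add_le (r * (a - b) + (r - e) * b + (e - e') * b) (e' * (b - c))]

section GeometricSums

variable {δ h : ℝ}

theorem hasSum_exp_neg_mul_nat_mul (hδh : 0 < δ * h) :
    HasSum (fun k : ℕ => exp (-δ * (k * h))) (1 - exp (-(δ * h)))⁻¹ := by
  simp only [exp_neg_mul_nat_mul]
  exact hasSum_geometric_of_lt_one (exp_pos _).le (exp_lt_one_iff.2 (by linarith))

theorem hasSum_nat_mul_exp_neg_mul_nat_mul (hδh : 0 < δ * h) :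
    HasSum (fun k : ℕ => k * exp (-δ * (k * h)))
      (exp (-(δ * h)) / (1 - exp (-(δ * h))) ^ 2) := by
  simp only [exp_neg_mul_nat_mul]
  apply hasSum_coe_mul_geometric_of_norm_lt_one
  rw [norm_of_nonneg (exp_pos _).le]
  exact exp_lt_one_iff.2 (by linarith)

theorem mul_inv_one_sub_exp_neg_le (hδ : 0 < δ) (hh : 0 < h) :
    h * (1 - exp (-(δ * h)))⁻¹ ≤ h + δ⁻¹ := by
  calc h * (1 - exp (-(δ * h)))⁻¹ ≤ h * (1 + (δ * h)⁻¹) :=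
        mul_le_mul_of_nonneg_left (inv_one_sub_exp_neg_le (by positivity)) hh.le
    _ = h + δ⁻¹ := by field_simp

theorem sq_mul_exp_neg_div_one_sub_sq_le (hδ : 0 < δ) (hh : 0 < h) :
    h ^ 2 * (exp (-(δ * h)) / (1 - exp (-(δ * h))) ^ 2) ≤ (h + δ⁻¹) ^ 2 := by
  have hq : exp (-(δ * h)) < 1 := exp_lt_one_iff.2 (by nlinarith)
  calc h ^ 2 * (exp (-(δ * h)) / (1 - exp (-(δ * h))) ^ 2)
      ≤ (h * (1 - exp (-(δ * h)))⁻¹) ^ 2 := by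
        rw [mul_pow, inv_pow, div_eq_mul_inv]
        exact mul_le_mul_of_nonneg_left
          (mul_le_of_le_one_left (by positivity) hq.le) (by positivity)
    _ ≤ (h + δ⁻¹) ^ 2 :=
        pow_le_pow_left₀ (mul_nonneg hh.le (inv_nonneg.2 (by linarith)))
          (mul_inv_one_sub_exp_neg_le hδ hh) 2

end GeometricSums

theorem hasSum_exp_neg_mul_sub_one_sub_mul_pow {ρ h : ℝ} (hρh₀ : 0 < ρ * h) (hρh : ρ * h ≤ 1) :
    HasSum (fun k : ℕ => exp (-ρ * (k * h)) - (1 - ρ * h) ^ k)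
      ((1 - exp (-(ρ * h)))⁻¹ - (ρ * h)⁻¹) := by
  have hgeom := hasSum_geometric_of_lt_one (r := 1 - ρ * h) (by linarith) (by linarith)
  rw [sub_sub_cancel] at hgeom
  exact (hasSum_exp_neg_mul_nat_mul hρh₀).sub hgeom

theorem le_nat_mul_exp_of_le_one_add_mul {e : ℕ → ℝ} {L μ c h : ℝ} (hL : 0 ≤ L) (hμ : 0 ≤ μ)
    (hc : 0 ≤ c) (hh : 0 ≤ h) (he0 : e 0 ≤ 0)
    (he : ∀ k : ℕ, e (k + 1) ≤ (1 + L * h) * e k + c * exp (μ * ((k + 1) * h))) (k : ℕ) :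
    e k ≤ k * c * exp ((L + μ) * (k * h)) := by
  induction k with
  | zero => simpa using he0
  | succ k ih =>
    have hfactor : 1 + L * h ≤ exp ((L + μ) * h) := by
      linarith [add_one_le_exp (L * h), exp_le_exp.2 (by nlinarith : L * h ≤ (L + μ) * h)]
    have hsource : exp (μ * ((k + 1) * h)) ≤ exp ((L + μ) * ((k + 1) * h)) :=
      exp_le_exp.2 (by nlinarith [mul_nonneg hL (mul_nonneg (by positivity : (0:ℝ) ≤ k + 1) hh)])
    have hsplit : exp ((L + μ) * ((k + 1) * h)) = exp ((L + μ) * h) * exp ((L + μ) * (k * h)) := by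
      rw [← exp_add]; ring_nf
    push_cast
    calc e (k + 1) ≤ (1 + L * h) * (k * c * exp ((L + μ) * (k * h)))
          + c * exp (μ * ((k + 1) * h)) := by
          linarith [he k, mul_le_mul_of_nonneg_left ih (by positivity : (0:ℝ) ≤ 1 + L * h)]
      _ ≤ exp ((L + μ) * h) * (k * c * exp ((L + μ) * (k * h)))
          + c * exp ((L + μ) * ((k + 1) * h)) := by gcongr
      _ = (k + 1) * c * exp ((L + μ) * ((k + 1) * h)) := by rw [hsplit]; ring

section Trajectory

variable {E : Type*} [NormedAddCommGroup E] [NormedSpace ℝ E] {y y' : ℝ → E} {A μ : ℝ}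

theorem norm_sub_le_mul_exp_of_hasDerivAt (hμ : 0 ≤ μ) (hy : ∀ t ≥ 0, HasDerivAt y (y' t) t)
    (hy' : ∀ t ≥ 0, ‖y' t‖ ≤ A * exp (μ * t)) {s t : ℝ} (hs : 0 ≤ s) (hst : s ≤ t) :
    ‖y t - y s‖ ≤ A * exp (μ * t) * (t - s) := by
  have hA : 0 ≤ A := nonneg_of_mul_nonneg_left ((norm_nonneg _).trans (hy' 0 le_rfl)) (exp_pos _)
  refine norm_image_sub_le_of_norm_deriv_le_segment'
    (fun τ hτ => (hy τ (hs.trans hτ.1)).hasDerivWithinAt) (fun τ hτ => ?_) t ⟨hst, le_rfl⟩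
  exact (hy' τ (hs.trans hτ.1)).trans
    (mul_le_mul_of_nonneg_left (exp_le_exp.2 (by nlinarith [hτ.2])) hA)

theorem one_add_norm_le_of_hasDerivAt {K : ℝ} (hK : 0 ≤ K) (hy : ∀ t ≥ 0, HasDerivAt y (y' t) t)
    (hy' : ∀ t ≥ 0, ‖y' t‖ ≤ K * (1 + ‖y t‖)) {t : ℝ} (ht : 0 ≤ t) :
    1 + ‖y t‖ ≤ (1 + ‖y 0‖) * exp (K * t) := by
  have hgronwall := norm_le_gronwallBound_of_norm_deriv_right_le (K := K) (ε := K)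
    (fun s hs => (hy s hs.1).continuousAt.continuousWithinAt)
    (fun s hs => (hy s hs.1).hasDerivWithinAt) le_rfl
    (fun s hs => by linarith [hy' s hs.1]) t ⟨ht, le_rfl⟩
  rw [sub_zero] at hgronwall
  rcases hK.eq_or_lt with rfl | hKpos
  · simpa [gronwallBound_K0] using hgronwall
  · rw [gronwallBound_of_K_ne_0 hKpos.ne', div_self hKpos.ne'] at hgronwall
    linarith

end Trajectory

section Euler

variable {E : Type*} [NormedAddCommGroup E] [NormedSpace ℝ E] {G : E → E} {V : Set E} {L : ℝ≥0}
  {y : ℝ → E} {A μ : ℝ}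

theorem norm_sub_euler_step_le (hy : ∀ t ≥ 0, HasDerivAt y (G (y t)) t) (hyV : ∀ t ≥ 0, y t ∈ V)
    (hG : LipschitzOnWith L G V) (hμ : 0 ≤ μ) (hgrowth : ∀ t ≥ 0, ‖G (y t)‖ ≤ A * exp (μ * t))
    {s h : ℝ} (hs : 0 ≤ s) (hh : 0 ≤ h) {w : E} (hw : w ∈ V) :
    ‖y (s + h) - (w + h • G w)‖ ≤ (1 + L * h) * ‖y s - w‖ + L * A * h ^ 2 * exp (μ * (s + h)) := by
  have hA : 0 ≤ A :=
    nonneg_of_mul_nonneg_left ((norm_nonneg _).trans (hgrowth 0 le_rfl)) (exp_pos _)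
  have hu : ∀ τ ≥ 0, HasDerivAt (fun τ => y τ - (w + (τ - s) • G w)) (G (y τ) - G w) τ := by
    intro τ hτ
    have := (hy τ hτ).sub ((((hasDerivAt_id τ).sub_const s).smul_const (G w)).const_add w)
    rwa [one_smul] at this
  have hderiv : ∀ τ ∈ Ico s (s + h),
      ‖G (y τ) - G w‖ ≤ L * (‖y s - w‖ + A * exp (μ * (s + h)) * h) := by
    intro τ hτ
    have hτ0 : 0 ≤ τ := hs.trans hτ.1
    have hdrift : ‖y τ - y s‖ ≤ A * exp (μ * (s + h)) * h :=
      (norm_sub_le_mul_exp_of_hasDerivAt hμ hy hgrowth hs hτ.1).trans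
        (mul_le_mul (mul_le_mul_of_nonneg_left (exp_le_exp.2 (by nlinarith [hτ.2])) hA)
          (by linarith [hτ.2]) (by linarith [hτ.1]) (by positivity))
    calc ‖G (y τ) - G w‖ ≤ L * ‖y τ - w‖ :=
          lipschitzOnWith_iff_norm_sub_le.1 hG (hyV τ hτ0) hw
      _ ≤ L * (‖y s - w‖ + A * exp (μ * (s + h)) * h) := by
          gcongr
          calc ‖y τ - w‖ = ‖(y s - w) + (y τ - y s)‖ := by congr 1; abel
            _ ≤ _ := (norm_add_le _ _).trans (by linarith)
  have hstep := norm_image_sub_le_of_norm_deriv_le_segment'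
    (fun τ hτ => (hu τ (hs.trans hτ.1)).hasDerivWithinAt) hderiv (s + h) ⟨by linarith, le_rfl⟩
  simp only [sub_self, zero_smul, add_zero, add_sub_cancel_left] at hstep
  calc ‖y (s + h) - (w + h • G w)‖
      ≤ ‖y s - w‖ + ‖y (s + h) - (w + h • G w) - (y s - w)‖ := norm_le_insert' _ _
    _ ≤ ‖y s - w‖ + L * (‖y s - w‖ + A * exp (μ * (s + h)) * h) * h := by gcongr
    _ = _ := by ring

theorem norm_sub_euler_le {z : ℕ → E} {h : ℝ} (hy : ∀ t ≥ 0, HasDerivAt y (G (y t)) t)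
    (hyV : ∀ t ≥ 0, y t ∈ V) (hG : LipschitzOnWith L G V) (hμ : 0 ≤ μ)
    (hgrowth : ∀ t ≥ 0, ‖G (y t)‖ ≤ A * exp (μ * t)) (hh : 0 ≤ h) (hz0 : z 0 = y 0)
    (hz : ∀ k, z (k + 1) = z k + h • G (z k)) (hzV : ∀ k, z k ∈ V) (k : ℕ) :
    ‖y (k * h) - z k‖ ≤ k * (L * A * h ^ 2) * exp ((L + μ) * (k * h)) := by
  have hA : 0 ≤ A :=
    nonneg_of_mul_nonneg_left ((norm_nonneg _).trans (hgrowth 0 le_rfl)) (exp_pos _)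
  refine le_nat_mul_exp_of_le_one_add_mul (e := fun k : ℕ => ‖y (k * h) - z k‖) L.coe_nonneg hμ
    (by positivity) hh (by simp [hz0]) (fun k => ?_) k
  have hstep := norm_sub_euler_step_le hy hyV hG hμ hgrowth (s := k * h) (by positivity) hh (hzV k)
  rw [hz, show ((k + 1 : ℕ) : ℝ) * h = k * h + h by push_cast; ring]
  convert hstep using 3; ring_nf

end Euler

theorem hasSum_integral_Ioc_nat_mul {E : Type*} [NormedAddCommGroup E] [NormedSpace ℝ E]
    {f : ℝ → E} {h : ℝ} (hh : 0 < h) (hf : IntegrableOn f (Ioi 0)) :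
    HasSum (fun k : ℕ => ∫ t in Ioc (k * h) ((k + 1) * h), f t) (∫ t in Ioi 0, f t) := by
  have hmono : Monotone fun k : ℕ => (k : ℝ) * h := fun i j hij =>
    mul_le_mul_of_nonneg_right (Nat.cast_le.2 hij) hh.le
  have hunion : ⋃ k : ℕ, Ioc ((k : ℝ) * h) ((k + 1 : ℕ) * h) = Ioi 0 := by
    have := iUnion_Ioc_map_succ_eq_Ioi (f := fun k : ℕ => (k : ℝ) * h) (fun k => hmono bot_le)
      (not_bddAbove_iff.2 fun x => by
        obtain ⟨k, hk⟩ := exists_nat_gt (x / h)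
        exact ⟨k * h, mem_range_self k, (div_lt_iff₀ hh).1 hk⟩)
    simpa [Order.succ_eq_add_one] using this
  have hdisj := hmono.pairwise_disjoint_on_Ioc_succ
  simp only [Order.succ_eq_add_one] at hdisj
  rw [← hunion] at hf ⊢
  simpa using hasSum_integral_iUnion (fun k => measurableSet_Ioc) hdisj hf

theorem integrableOn_exp_neg_mul_mul {φ : ℝ → ℝ} {ρ M : ℝ} (hρ : 0 < ρ)
    (hφ : ContinuousOn φ (Ici 0)) (hM : ∀ t ≥ 0, |φ t| ≤ M) :
    IntegrableOn (fun t => exp (-ρ * t) * φ t) (Ioi 0) :=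
  (exp_neg_integrableOn_Ioi 0 hρ).mul_bdd
    ((hφ.mono Ioi_subset_Ici_self).aestronglyMeasurable measurableSet_Ioi)
    ((ae_restrict_iff' measurableSet_Ioi).2 (ae_of_all _ fun t ht => hM t (le_of_lt ht)))

theorem geometric_error_sums_le {a b M δ ρ h : ℝ} (ha : 0 ≤ a) (hb : 0 ≤ b) (hM : 0 ≤ M)
    (hδ : 0 < δ) (hh : 0 < h) (hρh₀ : 0 < ρ * h) (hhρ : h ≤ ρ⁻¹) :
    a * h ^ 2 * (exp (-(δ * h)) / (1 - exp (-(δ * h))) ^ 2)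
        + M * ((1 - exp (-(ρ * h)))⁻¹ - (ρ * h)⁻¹) + h * b * (1 - exp (-(δ * h)))⁻¹ ≤
      a * (ρ⁻¹ + δ⁻¹) ^ 2 + M + b * (ρ⁻¹ + δ⁻¹) := by
  have hstep : h + δ⁻¹ ≤ ρ⁻¹ + δ⁻¹ := by linarith
  have hEuler : a * h ^ 2 * (exp (-(δ * h)) / (1 - exp (-(δ * h))) ^ 2) ≤ a * (ρ⁻¹ + δ⁻¹) ^ 2 := by
    rw [mul_assoc]
    gcongr
    exact (sq_mul_exp_neg_div_one_sub_sq_le hδ hh).trans (by gcongr)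
  have hdiscount : M * ((1 - exp (-(ρ * h)))⁻¹ - (ρ * h)⁻¹) ≤ M :=
    mul_le_of_le_one_right hM (by linarith [inv_one_sub_exp_neg_le hρh₀])
  have hquadrature : h * b * (1 - exp (-(δ * h)))⁻¹ ≤ b * (ρ⁻¹ + δ⁻¹) := by
    rw [mul_comm h, mul_assoc]
    gcongr
    exact (mul_inv_one_sub_exp_neg_le hδ hh).trans hstep
  linarith

section Payoff

variable {E : Type*} [NormedAddCommGroup E] [NormedSpace ℝ E] {G : E → E} {F : E → ℝ}
  {V : Set E} {L LF : ℝ≥0} {y : ℝ → E} {z : ℕ → E} {A μ ρ M h : ℝ}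

theorem abs_discounted_sub_le_of_mem_Ioc (hy : ∀ t ≥ 0, HasDerivAt y (G (y t)) t)
    (hyV : ∀ t ≥ 0, y t ∈ V) (hG : LipschitzOnWith L G V) (hF : LipschitzOnWith LF F V)
    (hFM : ∀ a ∈ V, |F a| ≤ M) (hμ : 0 ≤ μ) (hgrowth : ∀ t ≥ 0, ‖G (y t)‖ ≤ A * exp (μ * t))
    (hρ : L + μ ≤ ρ) (hh : 0 ≤ h) (hρh : ρ * h ≤ 1) (hz0 : z 0 = y 0)
    (hz : ∀ k, z (k + 1) = z k + h • G (z k)) (hzV : ∀ k, z k ∈ V) (k : ℕ) {t : ℝ}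
    (ht : t ∈ Ioc (k * h) ((k + 1) * h)) :
    |(1 - ρ * h) ^ k * F (z k) - exp (-ρ * t) * F (y t)| ≤
      LF * L * A * h ^ 2 * (k * exp (-(ρ - (L + μ)) * (k * h)))
        + M * (exp (-ρ * (k * h)) - (1 - ρ * h) ^ k)
        + h * (ρ * M + LF * A) * exp (-(ρ - (L + μ)) * (k * h)) := by
  set s : ℝ := k * h
  have hs : 0 ≤ s := by positivity
  have hst : s ≤ t := ht.1.le
  have hts : t - s ≤ h := by linarith [ht.2]
  have hFlip := lipschitzOnWith_iff_norm_sub_le.1 hF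
  have hA : 0 ≤ A :=
    nonneg_of_mul_nonneg_left ((norm_nonneg _).trans (hgrowth 0 le_rfl)) (exp_pos _)
  have hρ0 : 0 ≤ ρ := by linarith [L.coe_nonneg]
  have hEuler : |F (z k) - F (y s)| ≤ LF * (k * (L * A * h ^ 2) * exp ((L + μ) * s)) :=
    (hFlip (hzV k) (hyV s hs)).trans (mul_le_mul_of_nonneg_left
      (by rw [norm_sub_rev]; exact norm_sub_euler_le hy hyV hG hμ hgrowth hh hz0 hz hzV k)
      LF.coe_nonneg)
  have hdrift : |F (y s) - F (y t)| ≤ LF * (A * exp (μ * t) * h) := by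
    rw [abs_sub_comm]
    refine (hFlip (hyV t (hs.trans hst)) (hyV s hs)).trans
      (mul_le_mul_of_nonneg_left ?_ LF.coe_nonneg)
    exact (norm_sub_le_mul_exp_of_hasDerivAt hμ hy hgrowth hs hst).trans
      (mul_le_mul_of_nonneg_left hts (by positivity))
  have hpoint := abs_mul_sub_mul_le (by positivity : 0 ≤ (1 - ρ * h) ^ k)
    (one_sub_mul_pow_le_exp hρh k) (exp_pos (-ρ * t)).le
    (abs_exp_neg_mul_sub_exp_neg_mul_le hρ0 hst) hEuler hdrift (hFM _ (hyV s hs))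
  have hM : 0 ≤ M := (abs_nonneg _).trans (hFM _ (hyV s hs))
  have hdecay : exp (-ρ * s) ≤ exp (-(ρ - (L + μ)) * s) :=
    exp_le_exp.2 (by nlinarith [L.coe_nonneg])
  have hEuler' : (1 - ρ * h) ^ k * (LF * (k * (L * A * h ^ 2) * exp ((L + μ) * s))) ≤
      LF * L * A * h ^ 2 * (k * exp (-(ρ - (L + μ)) * s)) := by
    calc _ ≤ exp (-ρ * s) * (LF * (k * (L * A * h ^ 2) * exp ((L + μ) * s))) := by
          gcongr; exact one_sub_mul_pow_le_exp hρh k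
      _ = LF * L * A * h ^ 2 * (k * (exp (-ρ * s) * exp ((L + μ) * s))) := by ring
      _ = _ := by rw [← exp_add]; ring_nf
  have hdiscount : ρ * (t - s) * exp (-ρ * s) * M ≤ h * ρ * M * exp (-(ρ - (L + μ)) * s) := by
    calc _ ≤ ρ * h * exp (-(ρ - (L + μ)) * s) * M := by gcongr
      _ = _ := by ring
  have hdrift' : exp (-ρ * t) * (LF * (A * exp (μ * t) * h)) ≤
      h * LF * A * exp (-(ρ - (L + μ)) * s) := by
    calc _ = h * LF * A * exp (-ρ * t + μ * t) := by rw [exp_add]; ring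
      _ ≤ _ := by gcongr; nlinarith [L.coe_nonneg]
  linarith

theorem abs_mul_sub_integral_Ioc_le (hy : ∀ t ≥ 0, HasDerivAt y (G (y t)) t)
    (hyV : ∀ t ≥ 0, y t ∈ V) (hG : LipschitzOnWith L G V) (hF : LipschitzOnWith LF F V)
    (hFM : ∀ a ∈ V, |F a| ≤ M) (hμ : 0 ≤ μ) (hgrowth : ∀ t ≥ 0, ‖G (y t)‖ ≤ A * exp (μ * t))
    (hρ : L + μ ≤ ρ) (hh : 0 ≤ h) (hρh : ρ * h ≤ 1) (hz0 : z 0 = y 0)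
    (hz : ∀ k, z (k + 1) = z k + h • G (z k)) (hzV : ∀ k, z k ∈ V)
    (hint : IntegrableOn (fun t => exp (-ρ * t) * F (y t)) (Ioi 0)) (k : ℕ) :
    |h * ((1 - ρ * h) ^ k * F (z k)) - ∫ t in Ioc (k * h) ((k + 1) * h), exp (-ρ * t) * F (y t)| ≤
      h * (LF * L * A * h ^ 2 * (k * exp (-(ρ - (L + μ)) * (k * h)))
        + M * (exp (-ρ * (k * h)) - (1 - ρ * h) ^ k)
        + h * (ρ * M + LF * A) * exp (-(ρ - (L + μ)) * (k * h))) := by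
  have hlen : volume.real (Ioc ((k : ℝ) * h) ((k + 1) * h)) = h := by
    rw [Real.volume_real_Ioc_of_le (by nlinarith)]; ring
  have hIoc : Ioc ((k : ℝ) * h) ((k + 1) * h) ⊆ Ioi 0 := fun t ht =>
    lt_of_le_of_lt (by positivity) ht.1
  have hconst : h * ((1 - ρ * h) ^ k * F (z k)) =
      ∫ _ in Ioc ((k : ℝ) * h) ((k + 1) * h), (1 - ρ * h) ^ k * F (z k) := by
    rw [setIntegral_const, hlen, smul_eq_mul]
  rw [hconst, ← integral_sub (integrableOn_const measure_Ioc_lt_top.ne).integrable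
      (hint.mono_set hIoc).integrable]
  refine (norm_setIntegral_le_of_norm_le_const
    (f := fun t => (1 - ρ * h) ^ k * F (z k) - exp (-ρ * t) * F (y t)) measure_Ioc_lt_top
    fun t ht => abs_discounted_sub_le_of_mem_Ioc hy hyV hG hF hFM hμ hgrowth hρ hh hρh hz0 hz hzV
      k ht).trans_eq ?_
  rw [hlen, mul_comm]

theorem abs_discounted_euler_sum_sub_integral_le (hy : ∀ t ≥ 0, HasDerivAt y (G (y t)) t)
    (hyV : ∀ t ≥ 0, y t ∈ V) (hG : LipschitzOnWith L G V) (hF : LipschitzOnWith LF F V)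
    (hFM : ∀ a ∈ V, |F a| ≤ M) (hμ : 0 ≤ μ) (hgrowth : ∀ t ≥ 0, ‖G (y t)‖ ≤ A * exp (μ * t))
    (hρ : L + μ < ρ) (hh : 0 < h) (hρh : ρ * h ≤ 1) (hz0 : z 0 = y 0)
    (hz : ∀ k, z (k + 1) = z k + h • G (z k)) (hzV : ∀ k, z k ∈ V) :
    |h * ∑' k : ℕ, (1 - ρ * h) ^ k * F (z k) - ∫ t in Ioi 0, exp (-ρ * t) * F (y t)| ≤
      (LF * L * A * (ρ⁻¹ + (ρ - (L + μ))⁻¹) ^ 2 + M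
        + (ρ * M + LF * A) * (ρ⁻¹ + (ρ - (L + μ))⁻¹)) * h := by
  set δ := ρ - (L + μ)
  have hδ : 0 < δ := by simp only [δ]; linarith
  have hρ0 : 0 < ρ := by linarith [L.coe_nonneg]
  have hδh : 0 < δ * h := by positivity
  have hρh₀ : 0 < ρ * h := by positivity
  have hhρ : h ≤ ρ⁻¹ := by rw [← one_div, le_div_iff₀ hρ0]; linarith
  have hM : 0 ≤ M := (abs_nonneg _).trans (hFM _ (hzV 0))
  have hA : 0 ≤ A :=
    nonneg_of_mul_nonneg_left ((norm_nonneg _).trans (hgrowth 0 le_rfl)) (exp_pos _)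
  have hint : IntegrableOn (fun t => exp (-ρ * t) * F (y t)) (Ioi 0) :=
    integrableOn_exp_neg_mul_mul hρ0
      (hF.continuousOn.comp (fun t ht => (hy t ht).continuousAt.continuousWithinAt) hyV)
      (fun t ht => hFM _ (hyV t ht))
  have hsummable : Summable fun k : ℕ => (1 - ρ * h) ^ k * F (z k) := by
    refine .of_norm_bounded
      ((summable_geometric_of_lt_one (r := 1 - ρ * h) (by linarith) (by linarith)).mul_left M)
      fun k => ?_
    rw [norm_mul, norm_pow, norm_of_nonneg (by linarith : 0 ≤ 1 - ρ * h), mul_comm M]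
    exact mul_le_mul_of_nonneg_left (hFM _ (hzV k)) (by positivity)
  have hsum := (hsummable.hasSum.mul_left h).sub (hasSum_integral_Ioc_nat_mul hh hint)
  have hbound := ((((hasSum_nat_mul_exp_neg_mul_nat_mul hδh).mul_left (LF * L * A * h ^ 2)).add
    ((hasSum_exp_neg_mul_sub_one_sub_mul_pow hρh₀ hρh).mul_left M)).add
    ((hasSum_exp_neg_mul_nat_mul hδh).mul_left (h * (ρ * M + LF * A)))).mul_left h
  refine (hsum.norm_le_of_bounded hbound fun k => abs_mul_sub_integral_Ioc_le hy hyV hG hF hFM hμ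
    hgrowth hρ.le hh.le hρh hz0 hz hzV hint k).trans ?_
  exact (mul_le_mul_of_nonneg_left (geometric_error_sums_le (a := LF * L * A)
    (b := ρ * M + LF * A) (by positivity) (by positivity) hM hδ hh hρh₀ hhρ) hh.le).trans_eq
    (mul_comm _ _)

end Payoff

theorem lipschitzOnWith_comp_graph {α β γ : Type*} [SeminormedAddCommGroup α]
    [SeminormedAddCommGroup β] [SeminormedAddCommGroup γ] {f : α → β → γ} {Φ : α → β}
    {V : Set α} {U : Set β} {Lf Ls : ℝ} (hLf : 0 ≤ Lf)
    (hf : ∀ a ∈ V, ∀ u ∈ U, ∀ a' ∈ V, ∀ u' ∈ U, ‖f a u - f a' u'‖ ≤ Lf * (‖a - a'‖ + ‖u - u'‖))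
    (hΦ : ∀ a a', ‖Φ a - Φ a'‖ ≤ Ls * ‖a - a'‖) (hΦU : ∀ a ∈ V, Φ a ∈ U) :
    LipschitzOnWith (Lf * (1 + Ls)).toNNReal (fun a => f a (Φ a)) V := by
  refine lipschitzOnWith_iff_norm_sub_le.2 fun a ha b hb => ?_
  calc ‖f a (Φ a) - f b (Φ b)‖ ≤ Lf * (‖a - b‖ + Ls * ‖a - b‖) :=
        (hf a ha _ (hΦU a ha) b hb _ (hΦU b hb)).trans (by gcongr; exact hΦ a b)
    _ = Lf * (1 + Ls) * ‖a - b‖ := by ring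
    _ ≤ _ := by gcongr; exact Real.le_coe_toNNReal _

theorem exists_norm_le_mul_exp_of_bounded_or_linear_growth {E : Type*} [NormedAddCommGroup E]
    [NormedSpace ℝ E] {G : E → E} {V : Set E} {y : ℝ → E} {L K ρ : ℝ} (hK : 0 ≤ K)
    (hy : ∀ t ≥ 0, HasDerivAt y (G (y t)) t) (hyV : ∀ t ≥ 0, y t ∈ V)
    (hgrow : ∀ a ∈ V, ‖G a‖ ≤ K * (1 + ‖a‖))
    (hcase : (L < ρ ∧ ∃ Mg : ℝ, ∀ a ∈ V, ‖G a‖ ≤ Mg) ∨ L + K < ρ) :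
    ∃ A μ : ℝ, 0 ≤ μ ∧ L + μ < ρ ∧ ∀ t ≥ 0, ‖G (y t)‖ ≤ A * exp (μ * t) := by
  rcases hcase with ⟨hLρ, Mg, hMg⟩ | hLKρ
  · exact ⟨Mg, 0, le_rfl, by simpa using hLρ, fun t ht => by simpa using hMg _ (hyV t ht)⟩
  · refine ⟨K * (1 + ‖y 0‖), K, hK, hLKρ, fun t ht => ?_⟩
    calc ‖G (y t)‖ ≤ K * (1 + ‖y t‖) := hgrow _ (hyV t ht)
      _ ≤ K * ((1 + ‖y 0‖) * exp (K * t)) := by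
          gcongr; exact one_add_norm_le_of_hasDerivAt hK hy (fun s hs => hgrow _ (hyV s hs)) ht
      _ = K * (1 + ‖y 0‖) * exp (K * t) := by ring

theorem payoff_consistency_first_order_general (n m : ℕ) (ρ M Lf Lg Ls K : ℝ)
    (hρ : 0 < ρ) (hLf : 0 ≤ Lf) (hLg : 0 ≤ Lg) (hLs : 0 ≤ Ls) (hK : 0 ≤ K)
    (V : Set (EuclideanSpace ℝ (Fin n))) (U : Set (EuclideanSpace ℝ (Fin m)))
    (f : EuclideanSpace ℝ (Fin n) → EuclideanSpace ℝ (Fin m) → ℝ)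
    (g : EuclideanSpace ℝ (Fin n) → EuclideanSpace ℝ (Fin m) → EuclideanSpace ℝ (Fin n))
    (Φ : EuclideanSpace ℝ (Fin n) → EuclideanSpace ℝ (Fin m))
    (hf : ∀ a ∈ V, ∀ u ∈ U, ∀ a' ∈ V, ∀ u' ∈ U,
      |f a u - f a' u'| ≤ Lf * (‖a - a'‖ + ‖u - u'‖))
    (hg : ∀ a ∈ V, ∀ u ∈ U, ∀ a' ∈ V, ∀ u' ∈ U,
      ‖g a u - g a' u'‖ ≤ Lg * (‖a - a'‖ + ‖u - u'‖))
    (hfM : ∀ a ∈ V, ∀ u ∈ U, |f a u| ≤ M)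
    (hΦlip : ∀ a a', ‖Φ a - Φ a'‖ ≤ Ls * ‖a - a'‖)
    (hΦU : ∀ a ∈ V, Φ a ∈ U)
    -- linear growth constant of g on V × U
    (hgrow : ∀ a ∈ V, ∀ u ∈ U, ‖g a u‖ ≤ K * (1 + ‖a‖))
    -- either ρ > L with g bounded, or ρ > L + K, where L = Lg (1 + Ls)
    (hcase : (Lg * (1 + Ls) < ρ ∧ ∃ Mg : ℝ, ∀ a ∈ V, ∀ u ∈ U, ‖g a u‖ ≤ Mg) ∨
      Lg * (1 + Ls) + K < ρ)
    (x : EuclideanSpace ℝ (Fin n))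
    (y : ℝ → EuclideanSpace ℝ (Fin n))
    (hy0 : y 0 = x)
    (hyV : ∀ t ≥ (0:ℝ), y t ∈ V)
    (hy : ∀ t ≥ (0:ℝ), HasDerivAt y (g (y t) (Φ (y t))) t)
    (yseq : ℝ → ℕ → EuclideanSpace ℝ (Fin n))
    (hseq0 : ∀ h : ℝ, 0 < h → yseq h 0 = x)
    (hseqV : ∀ h : ℝ, 0 < h → ∀ k : ℕ, yseq h k ∈ V)
    (hseq : ∀ h : ℝ, 0 < h → ∀ k : ℕ,
      yseq h (k + 1) = yseq h k + h • g (yseq h k) (Φ (yseq h k))) :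
    ∃ C > (0:ℝ), ∃ h₀ > (0:ℝ), ∀ h : ℝ, 0 < h → h ≤ h₀ →
      |h * (∑' k : ℕ, (1 - ρ * h) ^ k * f (yseq h k) (Φ (yseq h k))) -
          ∫ t in Set.Ioi (0:ℝ), Real.exp (-ρ * t) * f (y t) (Φ (y t))| ≤ C * h := by
  have hL : ((Lg * (1 + Ls)).toNNReal : ℝ) = Lg * (1 + Ls) := Real.coe_toNNReal _ (by positivity)
  have hG := lipschitzOnWith_comp_graph hLg hg hΦlip hΦU
  have hF := lipschitzOnWith_comp_graph (f := f) hLf hf hΦlip hΦU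
  obtain ⟨A, μ, hμ, hLμρ, hgrowth⟩ := exists_norm_le_mul_exp_of_bounded_or_linear_growth hK hy hyV
    (fun a ha => hgrow a ha _ (hΦU a ha))
    (hcase.imp (fun ⟨hLρ, Mg, hMg⟩ => ⟨hLρ, Mg, fun a ha => hMg a ha _ (hΦU a ha)⟩) id)
  rw [← hL] at hLμρ
  exact ⟨max _ 1, lt_of_lt_of_le one_pos (le_max_right _ _), ρ⁻¹, inv_pos.2 hρ,
    fun h hh hhρ => (abs_discounted_euler_sum_sub_integral_le hy hyV hG hF
      (fun a ha => hfM a ha _ (hΦU a ha)) hμ hgrowth hLμρ hh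
      (by rwa [← le_div_iff₀' hρ, one_div]) ((hseq0 h hh).trans hy0.symm) (hseq h hh)
      (hseqV h hh)).trans (mul_le_mul_of_nonneg_right (le_max_left _ _) hh.le)⟩

/-- First-order payoff consistency: under `ρ > L` with `g` bounded, or `ρ > L + K`,
`|W_h(x) - W(x)| ≤ C h` for all sufficiently small `h > 0`, where `L = L_g (1 + L_s)`
and `K` is the linear-growth constant of `g`. -/
theorem payoff_consistency_first_order (n m : ℕ) (ρ M Lf Lg Ls K : ℝ)
    (hρ : 0 < ρ) (hM : 0 ≤ M) (hLf : 0 ≤ Lf) (hLg : 0 ≤ Lg) (hLs : 0 ≤ Ls) (hK : 0 ≤ K)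
    (V : Set (EuclideanSpace ℝ (Fin n))) (U : Set (EuclideanSpace ℝ (Fin m)))
    (f : EuclideanSpace ℝ (Fin n) → EuclideanSpace ℝ (Fin m) → ℝ)
    (g : EuclideanSpace ℝ (Fin n) → EuclideanSpace ℝ (Fin m) → EuclideanSpace ℝ (Fin n))
    (Φ : EuclideanSpace ℝ (Fin n) → EuclideanSpace ℝ (Fin m))
    (hf : ∀ a ∈ V, ∀ u ∈ U, ∀ a' ∈ V, ∀ u' ∈ U,
      |f a u - f a' u'| ≤ Lf * (‖a - a'‖ + ‖u - u'‖))
    (hg : ∀ a ∈ V, ∀ u ∈ U, ∀ a' ∈ V, ∀ u' ∈ U,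
      ‖g a u - g a' u'‖ ≤ Lg * (‖a - a'‖ + ‖u - u'‖))
    (hfM : ∀ a ∈ V, ∀ u ∈ U, |f a u| ≤ M)
    (hΦlip : ∀ a a', ‖Φ a - Φ a'‖ ≤ Ls * ‖a - a'‖)
    (hΦU : ∀ a ∈ V, Φ a ∈ U)
    -- linear growth constant of g on V × U
    (hgrow : ∀ a ∈ V, ∀ u ∈ U, ‖g a u‖ ≤ K * (1 + ‖a‖))
    -- either ρ > L with g bounded, or ρ > L + K, where L = Lg (1 + Ls)
    (hcase : (Lg * (1 + Ls) < ρ ∧ ∃ Mg : ℝ, ∀ a ∈ V, ∀ u ∈ U, ‖g a u‖ ≤ Mg) ∨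
      Lg * (1 + Ls) + K < ρ)
    (x : EuclideanSpace ℝ (Fin n)) (hx : x ∈ V)
    (y : ℝ → EuclideanSpace ℝ (Fin n))
    (hy0 : y 0 = x)
    (hyV : ∀ t ≥ (0:ℝ), y t ∈ V)
    (hy : ∀ t ≥ (0:ℝ), HasDerivAt y (g (y t) (Φ (y t))) t)
    (yseq : ℝ → ℕ → EuclideanSpace ℝ (Fin n))
    (hseq0 : ∀ h : ℝ, 0 < h → yseq h 0 = x)
    (hseqV : ∀ h : ℝ, 0 < h → ∀ k : ℕ, yseq h k ∈ V)
    (hseq : ∀ h : ℝ, 0 < h → ∀ k : ℕ,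
      yseq h (k + 1) = yseq h k + h • g (yseq h k) (Φ (yseq h k))) :
    ∃ C > (0:ℝ), ∃ h₀ > (0:ℝ), ∀ h : ℝ, 0 < h → h ≤ h₀ →
      |h * (∑' k : ℕ, (1 - ρ * h) ^ k * f (yseq h k) (Φ (yseq h k))) -
          ∫ t in Set.Ioi (0:ℝ), Real.exp (-ρ * t) * f (y t) (Φ (y t))| ≤ C * h :=
  payoff_consistency_first_order_general n m ρ M Lf Lg Ls K hρ hLf hLg hLs hK V U f g Φ hf hg hfM
    hΦlip hΦU hgrow hcase x y hy0 hyV hy yseq hseq0 hseqV hseq
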